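/- arXiv:1403.0476 — 2 statements merged into one kernel-verified Lean document; each statement's English description precedes it below -/
import Mathlib

section
/- Let Γ be a core valued constraint language on a finite set D. A unary weighting ω of the clone Pol(Γ) is a weighted polymorphism of Γ if and only if ω assigns positive weight only to operations f ∈ Pol₁(Γ) that are bijective and satisfy ϱ ∘ f = ϱ (f applied coordinate-wise) for every cost function ϱ ∈ Γ. -/
/-! Basic framework for Valued Constraint Satisfaction Problems (VCSP):
operations, clones, weightings, weighted clones, cost functions,
(weighted/fractional) polymorphisms, expressibility and weighted relational clones. -/

/-- A `k`-ary operation on `D`. -/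
abbrev Op (D : Type) (k : ℕ) : Type := (Fin k → D) → D

/-- The `i`-th `k`-ary projection on `D`. -/
def proj (D : Type) {k : ℕ} (i : Fin k) : Op D k := fun x => x i

/-- An operation is a projection. -/
def IsProj {D : Type} {k : ℕ} (f : Op D k) : Prop := ∃ i : Fin k, f = proj D i

/-- Superposition `f[g₁,…,g_k]` of a `k`-ary operation with `k` many `l`-ary operations. -/
def superposeOp {D : Type} {k l : ℕ} (f : Op D k) (g : Fin k → Op D l) : Op D l :=
  fun x => f fun i => g i x

/-- A clone of operations on `D`: contains all projections and is closed under superposition. -/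
structure IsClone {D : Type} (C : ∀ k, Set (Op D k)) : Prop where
  proj_mem : ∀ (k : ℕ) (i : Fin k), proj D i ∈ C k
  superpose_mem : ∀ (k l : ℕ) (f : Op D k) (g : Fin k → Op D l),
    f ∈ C k → (∀ i, g i ∈ C l) → superposeOp f g ∈ C l

/-- A `k`-ary weighting of the clone `C`: a rational-valued function on `k`-ary operations,
vanishing outside `C`, summing to `0`, and negative only on projections. -/
structure IsWeighting {D : Type} [Fintype D] [DecidableEq D] (C : ∀ k, Set (Op D k))
    {k : ℕ} (ω : Op D k → ℚ) : Prop where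
  support_mem : ∀ f : Op D k, ω f ≠ 0 → f ∈ C k
  sum_zero : ∑ f : Op D k, ω f = 0
  neg_imp_proj : ∀ f : Op D k, ω f < 0 → IsProj f

/-- Superposition of a `k`-ary weighting with `k` many `l`-ary operations. -/
def wSuperpose {D : Type} [Fintype D] [DecidableEq D] {k l : ℕ}
    (ω : Op D k → ℚ) (g : Fin k → Op D l) : Op D l → ℚ :=
  fun f' => ∑ f ∈ Finset.univ.filter (fun f : Op D k => superposeOp f g = f'), ω f

/-- A weighted clone over the clone `C`: a nonempty family of weightings of `C` closed under
non-negative scaling, addition of weightings of equal arity and proper superposition. -/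
structure IsWeightedClone {D : Type} [Fintype D] [DecidableEq D]
    (C : ∀ k, Set (Op D k)) (W : ∀ k, Set (Op D k → ℚ)) : Prop where
  clone : IsClone C
  weighting : ∀ (k : ℕ), ∀ ω ∈ W k, IsWeighting C ω
  nonempty : ∃ k, (W k).Nonempty
  scale_mem : ∀ (k : ℕ) (c : ℚ), 0 ≤ c → ∀ ω ∈ W k, (fun f => c * ω f) ∈ W k
  add_mem : ∀ (k : ℕ), ∀ ω₁ ∈ W k, ∀ ω₂ ∈ W k, (fun f => ω₁ f + ω₂ f) ∈ W k
  superpose_mem : ∀ (k l : ℕ), ∀ ω ∈ W k, ∀ g : Fin k → Op D l,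
    (∀ i, g i ∈ C l) → IsWeighting C (wSuperpose ω g) → wSuperpose ω g ∈ W l

/-- The positive clone of a family of weightings: all projections together with all operations
receiving positive weight from some weighting in the family. -/
def posClone {D : Type} [Fintype D] [DecidableEq D] (W : ∀ k, Set (Op D k → ℚ)) :
    ∀ k, Set (Op D k) :=
  fun k => {f | IsProj f ∨ ∃ ω ∈ W k, 0 < ω f}

/-- An `r`-ary cost function on `D`, with values in `ℚ ∪ {∞}`. -/
abbrev CostF (D : Type) (r : ℕ) : Type := (Fin r → D) → WithTop ℚ

/-- The feasibility relation of a cost function. -/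
def Feas {D : Type} {r : ℕ} (ϱ : CostF D r) : Set (Fin r → D) := {x | ϱ x ≠ ⊤}

/-- Coordinate-wise application of a `k`-ary operation to `k` many `r`-tuples. -/
def appRows {D : Type} {k r : ℕ} (f : Op D k) (xs : Fin k → Fin r → D) : Fin r → D :=
  fun j => f fun i => xs i j

/-- `f` is a polymorphism of `ϱ`: `Feas ϱ` is closed under coordinate-wise application of `f`. -/
def IsPolymorphism {D : Type} {k r : ℕ} (f : Op D k) (ϱ : CostF D r) : Prop :=
  ∀ xs : Fin k → Fin r → D, (∀ i, xs i ∈ Feas ϱ) → appRows f xs ∈ Feas ϱ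

/-- A valued constraint language on `D`: a set of cost functions of various arities. -/
abbrev VLang (D : Type) : Type := Set (Σ r : ℕ, CostF D r)

/-- The clone of polymorphisms of a language. -/
def Pol {D : Type} (Γ : VLang D) : ∀ k, Set (Op D k) :=
  fun _ => {f | ∀ ϱ ∈ Γ, IsPolymorphism f ϱ.2}

/-- Multiplication of an element of `ℚ ∪ {∞}` by a rational scalar (`c·∞ = ∞`). -/
def qmul (c : ℚ) (x : WithTop ℚ) : WithTop ℚ := WithTop.map (fun q => c * q) x

/-- The sum `∑_f ω(f)·ϱ(f(x₁,…,x_k))`, over operations with non-zero weight. -/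
def wSum {D : Type} [Fintype D] [DecidableEq D] {k r : ℕ}
    (ω : Op D k → ℚ) (ϱ : CostF D r) (xs : Fin k → Fin r → D) : WithTop ℚ :=
  ∑ f ∈ Finset.univ.filter (fun f : Op D k => ω f ≠ 0), qmul (ω f) (ϱ (appRows f xs))

/-- `ω` is a weighted polymorphism of the language `Γ`. -/
def IsWeightedPolymorphism {D : Type} [Fintype D] [DecidableEq D] (Γ : VLang D)
    {k : ℕ} (ω : Op D k → ℚ) : Prop :=
  IsWeighting (Pol Γ) ω ∧
    ∀ ϱ ∈ Γ, ∀ xs : Fin k → Fin ϱ.1 → D, (∀ i, xs i ∈ Feas ϱ.2) → wSum ω ϱ.2 xs ≤ 0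

/-- The weighted polymorphisms of a language. -/
def wPol {D : Type} [Fintype D] [DecidableEq D] (Γ : VLang D) :
    ∀ k, Set (Op D k → ℚ) :=
  fun _ => {ω | IsWeightedPolymorphism Γ ω}

/-- The positive clone `Pol⁺(Γ)` of a language. -/
def PolPlus {D : Type} [Fintype D] [DecidableEq D] (Γ : VLang D) : ∀ k, Set (Op D k) :=
  posClone (wPol Γ)

/-- The map `D → D` induced by a unary operation. -/
def unaryFun {D : Type} (f : Op D 1) : D → D := fun x => f fun _ => x

/-- A language is a core if every unary operation in its positive clone is bijective. -/
def IsCore {D : Type} [Fintype D] [DecidableEq D] (Γ : VLang D) : Prop :=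
  ∀ f ∈ PolPlus Γ 1, Function.Bijective (unaryFun f)

/-- An idempotent operation. -/
def Idem {D : Type} {k : ℕ} (f : Op D k) : Prop := ∀ x : D, (f fun _ => x) = x

/-- A cyclic operation: `f(x₁,…,x_k) = f(x₂,…,x_k,x₁)`. -/
def CyclicOp {D : Type} {k : ℕ} (f : Op D k) : Prop :=
  ∀ x : Fin k → D, f x = f (x ∘ ⇑(finRotate k))

/-- A conservative operation. -/
def Conservative {D : Type} {k : ℕ} (f : Op D k) : Prop :=
  ∀ x : Fin k → D, ∃ i, f x = x i

/-- A Taylor operation. -/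
def IsTaylor {D : Type} {k : ℕ} (t : Op D k) : Prop :=
  Idem t ∧ ∀ j : Fin k, ∃ a b : Fin k → Fin 2, a j = 0 ∧ b j = 1 ∧
    ∀ u : Fin 2 → D, (t fun i => u (a i)) = t fun i => u (b i)

/-- An instance of `VCSP(Γ)` with variable set `V`: a finite multiset of constraints,
each a tuple of variables together with a cost function from `Γ`. -/
structure VInstance (D : Type) (Γ : VLang D) (V : Type) where
  cons : Multiset (Σ r : ℕ, (Fin r → V) × CostF D r)
  mem_lang : ∀ c ∈ cons, (⟨c.1, c.2.2⟩ : Σ r : ℕ, CostF D r) ∈ Γ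

/-- The cost of an assignment for a VCSP instance. -/
def VInstance.cost {D V : Type} {Γ : VLang D} (I : VInstance D Γ V) (s : V → D) :
    WithTop ℚ :=
  (I.cons.map fun c => c.2.2 fun i => s (c.2.1 i)).sum

/-- A cost function is expressible over a language `Δ`. -/
def Expressible {D : Type} [Fintype D] [DecidableEq D] (Δ : VLang D) {r : ℕ}
    (ϱ : CostF D r) : Prop :=
  ∃ (n : ℕ) (I : VInstance D Δ (Fin n)) (v : Fin r → Fin n),
    ∀ x : Fin r → D,
      ϱ x = (Finset.univ.filter fun s : Fin n → D => ∀ i, s (v i) = x i).inf fun s => I.cost s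

/-- A language is closed under expressibility, non-negative scaling and
addition of rational constants. -/
def IsWClosed {D : Type} [Fintype D] [DecidableEq D] (Δ : VLang D) : Prop :=
  (∀ (r : ℕ) (ϱ : CostF D r), Expressible Δ ϱ → (⟨r, ϱ⟩ : Σ r : ℕ, CostF D r) ∈ Δ) ∧
  (∀ (r : ℕ) (ϱ : CostF D r) (c : ℚ), 0 ≤ c → (⟨r, ϱ⟩ : Σ r : ℕ, CostF D r) ∈ Δ →
    (⟨r, fun x => qmul c (ϱ x)⟩ : Σ r : ℕ, CostF D r) ∈ Δ) ∧
  (∀ (r : ℕ) (ϱ : CostF D r) (c : ℚ), (⟨r, ϱ⟩ : Σ r : ℕ, CostF D r) ∈ Δ →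
    (⟨r, fun x => ϱ x + (c : WithTop ℚ)⟩ : Σ r : ℕ, CostF D r) ∈ Δ)

/-- The weighted relational clone generated by `Γ`: the smallest language containing `Γ`
closed under expressibility, non-negative scaling and addition of rational constants. -/
def wRelClo {D : Type} [Fintype D] [DecidableEq D] (Γ : VLang D) : VLang D :=
  ⋂₀ {Δ : VLang D | Γ ⊆ Δ ∧ IsWClosed Δ}

/-- The weighting `(1/k)(∑_i 1_{f_i} − ∑_i 1_{π_i})` associated with a `k`-tuple of
`k`-ary operations (a multimorphism), weights added with multiplicity. -/
def multimorphismW {D : Type} [Fintype D] [DecidableEq D] {k : ℕ} (F : Fin k → Op D k) :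
    Op D k → ℚ :=
  fun g => (1 / (k : ℚ)) *
    (((Finset.univ.filter fun i : Fin k => F i = g).card : ℚ) -
     ((Finset.univ.filter fun i : Fin k => proj D i = g).card : ℚ))

/-- `Γ` admits the multimorphism `⟨F 0, …, F (k-1)⟩`. -/
def AdmitsMultimorphism {D : Type} [Fintype D] [DecidableEq D] {k : ℕ}
    (Γ : VLang D) (F : Fin k → Op D k) : Prop :=
  multimorphismW F ∈ wPol Γ k

/-- An `m`-ary fractional operation: a probability distribution on `m`-ary operations. -/
def IsFracOp {D : Type} [Fintype D] [DecidableEq D] {m : ℕ} (ω : Op D m → ℝ) : Prop :=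
  (∀ f, 0 ≤ ω f) ∧ ∑ f : Op D m, ω f = 1

/-- Multiplication of an element of `ℚ ∪ {∞}` by a real scalar, landing in `ℝ ∪ {∞}`. -/
def rmul (c : ℝ) (x : WithTop ℚ) : WithTop ℝ := WithTop.map (fun q : ℚ => c * (q : ℝ)) x

/-- `ω` is a fractional polymorphism of the language `Γ`. -/
def IsFracPolymorphism {D : Type} [Fintype D] [DecidableEq D] (Γ : VLang D) {m : ℕ}
    (ω : Op D m → ℝ) : Prop :=
  IsFracOp ω ∧ ∀ ϱ ∈ Γ, ∀ xs : Fin m → Fin ϱ.1 → D, (∀ i, xs i ∈ Feas ϱ.2) →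
    (∑ g ∈ Finset.univ.filter fun g : Op D m => 0 < ω g, rmul (ω g) (ϱ.2 (appRows g xs)))
      ≤ rmul (1 / (m : ℝ)) (∑ i : Fin m, ϱ.2 (xs i))

/-- The positive clone `fPol⁺(Γ)` defined via fractional polymorphisms. -/
def fPolPlus {D : Type} [Fintype D] [DecidableEq D] (Γ : VLang D) : ∀ k, Set (Op D k) :=
  fun k => {f | IsProj f ∨ ∃ ω : Op D k → ℝ, IsFracPolymorphism Γ ω ∧ 0 < ω f}

/-- Application of a binary operation to two elements. -/
def ap2 {D : Type} (f : Op D 2) (a b : D) : D := f ![a, b]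

/-- Application of a ternary operation to three elements. -/
def ap3 {D : Type} (f : Op D 3) (a b c : D) : D := f ![a, b, c]

/-- A ternary operation restricts to a majority operation on a subset `S`. -/
def IsMajorityOn {D : Type} (f : Op D 3) (S : Set D) : Prop :=
  ∀ x ∈ S, ∀ y ∈ S, ap3 f x x y = x ∧ ap3 f x y x = x ∧ ap3 f y x x = x

/-- A ternary operation restricts to a minority operation on a subset `S`. -/
def IsMinorityOn {D : Type} (f : Op D 3) (S : Set D) : Prop :=
  ∀ x ∈ S, ∀ y ∈ S, ap3 f x x y = y ∧ ap3 f x y x = y ∧ ap3 f y x x = y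

/-- The language `Γ_c`: `Γ` together with all unary cost functions `N_a`
(`N_a(a) = 0`, `N_a(x) = ∞` for `x ≠ a`). -/
def withConstants {D : Type} [DecidableEq D] (Γ : VLang D) : VLang D :=
  Γ ∪ {p : Σ r : ℕ, CostF D r |
        ∃ a : D, p = ⟨1, fun x => if x 0 = a then (0 : WithTop ℚ) else ⊤⟩}

/-- A language is conservative if it contains every `{0,1}`-valued unary cost function. -/
def ConservativeLang {D : Type} (Γ : VLang D) : Prop :=
  ∀ ϱ : CostF D 1, (∀ x, ϱ x = 0 ∨ ϱ x = 1) → (⟨1, ϱ⟩ : Σ r : ℕ, CostF D r) ∈ Γ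

/-- The coordinate-wise action of a `k`-ary operation on `A` on the power `A^n`. -/
def opPow {A : Type} (n : ℕ) {k : ℕ} (f : Op A k) : Op (Fin n → A) k :=
  fun xs c => f fun i => xs i c

/-- Regrouping an `(n·r)`-tuple over `A` into an `r`-tuple of elements of `A^n`. -/
def regroup (A : Type) (n r : ℕ) (y : Fin (n * r) → A) : Fin r → Fin n → A :=
  fun j c => y (finProdFinEquiv (c, j))

/-! For a unary weighting, `∑_f ω(f) ϱ(f x) ≤ 0` says that the operations of positive weight
do not increase `ϱ(x)` on average. In a core they are bijections preserving feasibility, so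
they permute the finite set of feasible tuples and leave the total cost over it unchanged;
hence the weighted drift `∑_f ω(f)(ϱ(f x) − ϱ(x))` vanishes at every feasible `x`. Since
`(b − a)² = (b² − a²) − 2a(b − a)`, the weighted total of the squared changes
`(ϱ(f x) − ϱ(x))²` is then a difference of two vanishing totals, so every change is zero. -/

open Finset Function

theorem WithTop.eq_of_untopD_eq {α : Type*} {a b : WithTop α} {d : α}
    (htop : a ≠ ⊤ ↔ b ≠ ⊤) (h : a.untopD d = b.untopD d) : a = b := by
  cases a <;> cases b <;> simp_all

section WeightedDrift

variable {X ι K : Type*} [Fintype X] [CommRing K] {s : Finset ι} {w : ι → K} {σ : ι → X → X}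

theorem sum_sum_weighted_drift_eq_zero (hσ : ∀ i ∈ s, Bijective (σ i)) (ψ : X → K) :
    ∑ x, ∑ i ∈ s, w i * (ψ (σ i x) - ψ x) = 0 := by
  rw [sum_comm]
  refine sum_eq_zero fun i hi => ?_
  rw [← mul_sum, sum_sub_distrib, (hσ i hi).sum_comp, sub_self, mul_zero]

theorem comp_eq_of_weighted_sum_comp_nonpos [LinearOrder K] [IsStrictOrderedRing K]
    {φ : X → K} (hσ : ∀ i ∈ s, Bijective (σ i)) (hneg : ∀ i ∈ s, w i < 0 → σ i = id)
    (hsum : ∑ i ∈ s, w i = 0) (hle : ∀ x, ∑ i ∈ s, w i * φ (σ i x) ≤ 0)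
    {i : ι} (hi : i ∈ s) (hpos : 0 < w i) :
    φ ∘ σ i = φ := by
  have drift_eq (x : X) :
      ∑ j ∈ s, w j * (φ (σ j x) - φ x) = ∑ j ∈ s, w j * φ (σ j x) := by
    simp only [mul_sub, sum_sub_distrib, ← sum_mul, hsum, zero_mul, sub_zero]
  have drift_zero : ∀ x, ∑ j ∈ s, w j * (φ (σ j x) - φ x) = 0 := by
    have := sum_sum_weighted_drift_eq_zero (w := w) hσ φ
    simpa [sum_eq_zero_iff_of_nonpos fun x _ => (drift_eq x).trans_le (hle x)] using this
  have weighted_sq_nonneg (x : X) : ∀ j ∈ s, 0 ≤ w j * (φ (σ j x) - φ x) ^ 2 := by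
    intro j hj
    rcases lt_or_ge (w j) 0 with hneg' | hnonneg
    · simp [hneg j hj hneg']
    · positivity
  have squares : ∑ x, ∑ j ∈ s, w j * (φ (σ j x) - φ x) ^ 2 = 0 :=
    calc ∑ x, ∑ j ∈ s, w j * (φ (σ j x) - φ x) ^ 2
        = ∑ x, ∑ j ∈ s, w j * ((φ ^ 2) (σ j x) - (φ ^ 2) x)
          - ∑ x, 2 * φ x * ∑ j ∈ s, w j * (φ (σ j x) - φ x) := by
          simp only [mul_sum, ← sum_sub_distrib, Pi.pow_apply]
          exact sum_congr rfl fun x _ => sum_congr rfl fun j _ => by ring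
      _ = 0 := by simp only [sum_sum_weighted_drift_eq_zero hσ, drift_zero]; simp
  funext x
  have hterm := (sum_eq_zero_iff_of_nonneg (weighted_sq_nonneg x)).mp
    ((sum_eq_zero_iff_of_nonneg fun x _ => sum_nonneg (weighted_sq_nonneg x)).mp squares x
      (mem_univ x)) i hi
  simpa [hpos.ne', sub_eq_zero] using hterm

end WeightedDrift

section UnaryWeightedPolymorphism

variable {D : Type} {r : ℕ}

theorem appRows_unary (f : Op D 1) (xs : Fin 1 → Fin r → D) :
    appRows f xs = unaryFun f ∘ xs 0 := by
  funext j
  exact congrArg f (funext fun i => by rw [Subsingleton.elim i 0])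

theorem IsPolymorphism.comp_mem_feas_iff [Finite D] {f : Op D 1} {ϱ : CostF D r}
    (hf : IsPolymorphism f ϱ) (hbij : Bijective (unaryFun f)) (x : Fin r → D) :
    unaryFun f ∘ x ∈ Feas ϱ ↔ x ∈ Feas ϱ := by
  refine ⟨fun hx => ?_, fun hx => hf (fun _ => x) fun _ => hx⟩
  have hmaps : Set.MapsTo (unaryFun f ∘ ·) (Feas ϱ) (Feas ϱ) := fun y hy =>
    hf (fun _ => y) fun _ => hy
  have hinj : Injective (unaryFun f ∘ · : (Fin r → D) → Fin r → D) := hbij.1.comp_left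
  obtain ⟨y, hy, hxy⟩ :=
    ((Set.toFinite _).injOn_iff_bijOn_of_mapsTo hmaps).mp hinj.injOn |>.surjOn hx
  exact hinj hxy ▸ hy

variable [Fintype D] [DecidableEq D] {C : ∀ k, Set (Op D k)}

theorem IsWeighting.unaryFun_eq_id_of_neg {ω : Op D 1 → ℚ} (hω : IsWeighting C ω)
    {f : Op D 1} (hf : ω f < 0) : unaryFun f = id := by
  obtain ⟨i, rfl⟩ := hω.neg_imp_proj f hf
  rfl

theorem IsWeighting.bijective_unaryFun_of_ne_zero {ω : Op D 1 → ℚ} (hω : IsWeighting C ω)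
    (hbij : ∀ g, 0 < ω g → Bijective (unaryFun g)) {g : Op D 1} (hg : ω g ≠ 0) :
    Bijective (unaryFun g) := by
  rcases hg.lt_or_gt with hneg | hpos
  · rw [hω.unaryFun_eq_id_of_neg hneg]
    exact bijective_id
  · exact hbij g hpos

theorem IsWeighting.sum_support_eq_zero {k : ℕ} {ω : Op D k → ℚ} (hω : IsWeighting C ω) :
    ∑ f ∈ univ.filter (ω · ≠ 0), ω f = 0 := by
  rw [sum_filter_ne_zero, hω.sum_zero]

theorem wSum_eq_coe {k : ℕ} {ω : Op D k → ℚ} {ϱ : CostF D r} {xs : Fin k → Fin r → D}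
    (hfeas : ∀ f, ω f ≠ 0 → appRows f xs ∈ Feas ϱ) :
    wSum ω ϱ xs = ↑(∑ f ∈ univ.filter (ω · ≠ 0), ω f * (ϱ (appRows f xs)).untopD 0) := by
  rw [wSum, WithTop.coe_sum]
  refine sum_congr rfl fun f hf => ?_
  obtain ⟨q, hq⟩ := WithTop.ne_top_iff_exists.mp (hfeas f (mem_filter.mp hf).2)
  rw [← hq]
  rfl

theorem IsWeightedPolymorphism.cost_comp_eq_of_pos {Γ : VLang D} {ω : Op D 1 → ℚ}
    (hω : IsWeightedPolymorphism Γ ω) (hbij : ∀ g, 0 < ω g → Bijective (unaryFun g))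
    {ϱ : Σ r : ℕ, CostF D r} (hϱ : ϱ ∈ Γ) {f : Op D 1} (hf : 0 < ω f) (x : Fin ϱ.1 → D) :
    ϱ.2 (unaryFun f ∘ x) = ϱ.2 x := by
  obtain ⟨r, ϱ⟩ := ϱ
  set s := univ.filter (ω · ≠ 0)
  have hbij_s (g : Op D 1) (hg : g ∈ s) : Bijective (unaryFun g) :=
    hω.1.bijective_unaryFun_of_ne_zero hbij (mem_filter.mp hg).2
  have hfeas (g : Op D 1) (hg : g ∈ s) (y : Fin r → D) :
      unaryFun g ∘ y ∈ Feas ϱ ↔ y ∈ Feas ϱ :=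
    (hω.1.support_mem g (mem_filter.mp hg).2 ⟨r, ϱ⟩ hϱ).comp_mem_feas_iff (hbij_s g hg) y
  have hle (y : Fin r → D) : ∑ g ∈ s, ω g * (ϱ (unaryFun g ∘ y)).untopD 0 ≤ 0 := by
    by_cases hy : y ∈ Feas ϱ
    · have hwSum := wSum_eq_coe (ϱ := ϱ) (xs := fun _ => y) fun g hg =>
        (hfeas g (mem_filter.mpr ⟨mem_univ g, hg⟩) y).mpr hy
      exact_mod_cast hwSum.symm.trans_le (hω.2 ⟨r, ϱ⟩ hϱ _ fun _ => hy)
    · refine (sum_eq_zero fun g hg => ?_).le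
      rw [not_not.mp (mt (hfeas g hg y).mp hy)]
      exact mul_zero _
  have hfs : f ∈ s := mem_filter.mpr ⟨mem_univ f, hf.ne'⟩
  have huntop := comp_eq_of_weighted_sum_comp_nonpos (φ := fun y => (ϱ y).untopD 0)
    (fun g hg => (hbij_s g hg).comp_left)
    (fun g _ hneg => by rw [hω.1.unaryFun_eq_id_of_neg hneg]; rfl)
    hω.1.sum_support_eq_zero hle hfs hf
  exact WithTop.eq_of_untopD_eq (hfeas f hfs x) (congrFun huntop x)

theorem isWeightedPolymorphism_of_cost_comp_eq {Γ : VLang D} {ω : Op D 1 → ℚ}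
    (hω : IsWeighting (Pol Γ) ω)
    (H : ∀ f, 0 < ω f → ∀ ϱ ∈ Γ, ∀ x : Fin ϱ.1 → D, ϱ.2 (unaryFun f ∘ x) = ϱ.2 x) :
    IsWeightedPolymorphism Γ ω := by
  refine ⟨hω, fun ϱ hϱ xs hfeas => ?_⟩
  have hcost (f : Op D 1) (hf : ω f ≠ 0) : ϱ.2 (appRows f xs) = ϱ.2 (xs 0) := by
    rw [appRows_unary]
    rcases hf.lt_or_gt with hneg | hpos
    · rw [hω.unaryFun_eq_id_of_neg hneg, id_comp]
    · exact H f hpos ϱ hϱ (xs 0)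
  rw [wSum_eq_coe fun f hf => (hcost f hf).trans_ne (hfeas 0),
    sum_congr rfl fun f hf => by rw [hcost f (mem_filter.mp hf).2], ← sum_mul,
    hω.sum_support_eq_zero, zero_mul]
  rfl

end UnaryWeightedPolymorphism

theorem unary_weighted_polymorphism_iff_general {D : Type} [Fintype D] [DecidableEq D]
    (Γ : VLang D) (hcore : IsCore Γ) (ω : Op D 1 → ℚ)
    (hω : IsWeighting (Pol Γ) ω) :
    ω ∈ wPol Γ 1 ↔
      ∀ f : Op D 1, 0 < ω f →
        f ∈ Pol Γ 1 ∧ Function.Bijective (unaryFun f) ∧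
          ∀ ϱ ∈ Γ, ∀ x : Fin ϱ.1 → D, ϱ.2 (fun j => unaryFun f (x j)) = ϱ.2 x := by
  refine ⟨fun hmem f hf => ?_, fun H => isWeightedPolymorphism_of_cost_comp_eq hω
    fun f hf => (H f hf).2.2⟩
  have hbij (g : Op D 1) (hg : 0 < ω g) : Bijective (unaryFun g) :=
    hcore g (Or.inr ⟨ω, hmem, hg⟩)
  exact ⟨hω.support_mem f hf.ne', hbij f hf, fun ϱ hϱ =>
    IsWeightedPolymorphism.cost_comp_eq_of_pos hmem hbij hϱ hf⟩

/-- For a core language `Γ`, a unary weighting of `Pol(Γ)` is a weighted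
polymorphism of `Γ` iff it assigns positive weight only to bijective operations
`f ∈ Pol₁(Γ)` satisfying `ϱ ∘ f = ϱ` for all `ϱ ∈ Γ`. -/
theorem unary_weighted_polymorphism_iff {D : Type} [Fintype D] [DecidableEq D] [Nonempty D]
    (Γ : VLang D) (hcore : IsCore Γ) (ω : Op D 1 → ℚ)
    (hω : IsWeighting (Pol Γ) ω) :
    ω ∈ wPol Γ 1 ↔
      ∀ f : Op D 1, 0 < ω f →
        f ∈ Pol Γ 1 ∧ Function.Bijective (unaryFun f) ∧
          ∀ ϱ ∈ Γ, ∀ x : Fin ϱ.1 → D, ϱ.2 (fun j => unaryFun f (x j)) = ϱ.2 x :=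
  unary_weighted_polymorphism_iff_general Γ hcore ω hω
end

section
/- Let Γ be a finite core valued constraint language over a finite set D, and let R ⊆ D^r be an r-ary relation that is compatible with every operation in Pol⁺(Γ). Then there exists a cost function ϱ_R of arity r in wRelClo(Γ) and a rational number P such that for every r-tuple x ∈ D^r: ϱ_R(x) ≥ P, and ϱ_R(x) = P if and only if x ∈ R. -/
/-!
Enumerate `R` as `t₁, …, t_m`. An assignment to variables indexed by `D^m` is an `m`-ary operation
`s`, and for nonnegative weights `w` on the pairs (`ϱ ∈ Γ`, feasible arguments `x₁, …, x_m`) the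
instance with constraints `w · ϱ` on the columns of the `xᵢ` gives `s` the cost
`∑ w · ϱ(s(x₁, …, x_m))` if `s ∈ Pol(Γ)` and `∞` otherwise. By Farkas' lemma each polymorphism
`g ∉ Pol⁺(Γ)` is separated from the projections by some such weights, since the dual solution
would be a weighted polymorphism giving `g` positive weight. Summing these weights over all such
`g`, the projections reach the minimal cost `P` and every polymorphism of cost `P` lies in
`Pol⁺(Γ)`. Minimising over all variables except the columns of `t` gives `ϱ_R`: the projections
give `ϱ_R(tᵢ) = P`, and a tuple of cost `P` is `s(t₁, …, t_m)` for some `s ∈ Pol⁺(Γ)`, so it lies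
in `R`.
-/

open Matrix

section Farkas

variable {𝕜 J n : Type*} [Field 𝕜] [LinearOrder 𝕜] [IsStrictOrderedRing 𝕜] [Fintype n]

lemma sub_smul_dotProduct_eq_dotProduct_sub_smul (v a y y' : n → 𝕜) (α : 𝕜) :
    (v - (v ⬝ᵥ y / α) • a) ⬝ᵥ y' = v ⬝ᵥ (y' - (a ⬝ᵥ y' / α) • y) := by
  simp only [sub_dotProduct, dotProduct_sub, smul_dotProduct, dotProduct_smul, smul_eq_mul]
  ring

theorem farkas_sum (s : Finset J) (A : J → n → 𝕜) (b : n → 𝕜) :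
    (∃ c : J → 𝕜, 0 ≤ c ∧ ∑ j ∈ s, c j • A j = b) ∨
      ∃ y : n → 𝕜, (∀ j ∈ s, A j ⬝ᵥ y ≤ 0) ∧ 0 < b ⬝ᵥ y := by
  classical
  induction s using Finset.induction_on generalizing A b with
  | empty =>
    by_cases hb : b = 0
    · exact .inl ⟨0, le_rfl, by simp [hb]⟩
    · refine .inr ⟨b, by simp, ?_⟩
      exact lt_of_le_of_ne (Finset.sum_nonneg fun i _ => mul_self_nonneg (b i))
        (Ne.symm (dotProduct_self_eq_zero.not.mpr hb))
  | @insert j₀ s hj₀ ih =>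
    have sum_update (c : J → 𝕜) (γ : 𝕜) :
        ∑ j ∈ insert j₀ s, Function.update c j₀ γ j • A j = γ • A j₀ + ∑ j ∈ s, c j • A j := by
      rw [Finset.sum_insert hj₀, Function.update_self]
      congr 1
      exact Finset.sum_congr rfl fun j hj => by
        rw [Function.update_of_ne (ne_of_mem_of_not_mem hj hj₀)]
    obtain ⟨c, hc, rfl⟩ | ⟨y, hy, hby⟩ := ih A b
    · exact .inl ⟨Function.update c j₀ 0, le_update_iff.mpr ⟨le_rfl, fun j _ => hc j⟩,
        by rw [sum_update, zero_smul, zero_add]⟩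
    by_cases hα : A j₀ ⬝ᵥ y ≤ 0
    · exact .inr ⟨y, (Finset.forall_mem_insert _ _ _).mpr ⟨hα, hy⟩, hby⟩
    push Not at hα
    set α := A j₀ ⬝ᵥ y
    -- Project along `A j₀` onto the hyperplane `y ⬝ᵥ · = 0` and recurse.
    obtain ⟨c, hc, hcb⟩ | ⟨y', hy', hby'⟩ :=
      ih (fun j => A j - (A j ⬝ᵥ y / α) • A j₀) (b - (b ⬝ᵥ y / α) • A j₀)
    · set γ := b ⬝ᵥ y / α - ∑ j ∈ s, c j * (A j ⬝ᵥ y / α)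
      have hγ : 0 ≤ γ := by
        have : ∑ j ∈ s, c j * (A j ⬝ᵥ y / α) ≤ 0 := Finset.sum_nonpos fun j hj =>
          mul_nonpos_of_nonneg_of_nonpos (hc j) (div_nonpos_of_nonpos_of_nonneg (hy j hj) hα.le)
        linarith [div_pos hby hα]
      refine .inl ⟨Function.update c j₀ γ, le_update_iff.mpr ⟨hγ, fun j _ => hc j⟩, ?_⟩
      simp only [smul_sub, smul_smul, Finset.sum_sub_distrib, ← Finset.sum_smul] at hcb
      rw [sum_update]
      linear_combination (norm := module) hcb
    · refine .inr ⟨y' - (A j₀ ⬝ᵥ y' / α) • y,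
        (Finset.forall_mem_insert _ _ _).mpr ⟨?_, fun j hj => ?_⟩, ?_⟩
      · rw [← sub_smul_dotProduct_eq_dotProduct_sub_smul, div_self hα.ne', one_smul, sub_self,
          zero_dotProduct]
      · rw [← sub_smul_dotProduct_eq_dotProduct_sub_smul]; exact hy' j hj
      · rwa [← sub_smul_dotProduct_eq_dotProduct_sub_smul]

theorem Matrix.farkas [Fintype J] (A : Matrix J n 𝕜) (b : n → 𝕜) :
    (∃ c : J → 𝕜, 0 ≤ c ∧ c ᵥ* A = b) ∨ ∃ y : n → 𝕜, A *ᵥ y ≤ 0 ∧ 0 < b ⬝ᵥ y := by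
  simpa [vecMul_eq_sum, Pi.le_def, mulVec] using farkas_sum Finset.univ A b

end Farkas

lemma proj_mem_Pol {D : Type} (Γ : VLang D) {k : ℕ} (i : Fin k) : proj D i ∈ Pol Γ k :=
  fun _ _ _ hxs => hxs i

section WeightedRelationalClone

variable {D : Type} [Fintype D] [DecidableEq D]

lemma Expressible.mono {Δ Δ' : VLang D} (h : Δ ⊆ Δ') {r : ℕ} {ϱ : CostF D r}
    (hϱ : Expressible Δ ϱ) : Expressible Δ' ϱ := by
  obtain ⟨n, I, v, hI⟩ := hϱ
  exact ⟨n, ⟨I.cons, fun c hc => h (I.mem_lang c hc)⟩, v, hI⟩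

lemma Expressible.of_instance {Δ : VLang D} {V : Type} [Fintype V] [DecidableEq V] {r : ℕ}
    (I : VInstance D Δ V) (v : Fin r → V) :
    Expressible Δ fun x =>
      (Finset.univ.filter fun s : V → D => ∀ i, s (v i) = x i).inf I.cost := by
  let e := Fintype.equivFin V
  let I' : VInstance D Δ (Fin (Fintype.card V)) :=
    ⟨I.cons.map fun c => ⟨c.1, e ∘ c.2.1, c.2.2⟩, by
      simp only [Multiset.mem_map]
      rintro _ ⟨c, hc, rfl⟩
      exact I.mem_lang c hc⟩
  have hcost (s : Fin (Fintype.card V) → D) : I'.cost s = I.cost (s ∘ e) := by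
    simp only [VInstance.cost, I', Multiset.map_map]; rfl
  refine ⟨_, I', e ∘ v, fun x => le_antisymm ?_ ?_⟩
  · refine Finset.le_inf fun s hs => ?_
    rw [hcost]
    exact Finset.inf_le (by simpa using hs)
  · refine Finset.le_inf fun s hs => ?_
    calc _ ≤ I'.cost (s ∘ e.symm) := Finset.inf_le (by simpa using hs)
      _ = I.cost s := by rw [hcost, Function.comp_assoc, e.symm_comp_self, Function.comp_id]

lemma subset_wRelClo (Γ : VLang D) : Γ ⊆ wRelClo Γ :=
  fun _ hp => Set.mem_sInter.mpr fun _ hΔ => hΔ.1 hp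

lemma isWClosed_wRelClo (Γ : VLang D) : IsWClosed (wRelClo Γ) := by
  refine ⟨fun r ϱ hϱ => ?_, fun r ϱ c hc hϱ => ?_, fun r ϱ c hϱ => ?_⟩ <;>
    refine Set.mem_sInter.mpr fun Δ hΔ => ?_
  · exact hΔ.2.1 r ϱ (hϱ.mono fun _ hp => Set.mem_sInter.mp hp Δ hΔ)
  · exact hΔ.2.2.1 r ϱ c hc (Set.mem_sInter.mp hϱ Δ hΔ)
  · exact hΔ.2.2.2 r ϱ c (Set.mem_sInter.mp hϱ Δ hΔ)

end WeightedRelationalClone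

section FeasibleArguments

variable {D : Type} {Γ : VLang D} {m : ℕ}

structure FeasArgs (Γ : VLang D) (m : ℕ) where
  cf : Γ
  args : Fin m → Fin cf.1.1 → D
  feasible : ∀ i, args i ∈ Feas cf.1.2

instance [Finite D] [Finite Γ] : Finite (FeasArgs Γ m) :=
  Finite.of_injective (fun ξ => (⟨ξ.cf, ξ.args⟩ : Σ p : Γ, Fin m → Fin p.1.1 → D)) <| by
    rintro ⟨_, _, _⟩ ⟨_, _, _⟩ h
    cases h
    rfl

noncomputable instance [Finite D] [Finite Γ] : Fintype (FeasArgs Γ m) := Fintype.ofFinite _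

/-- Entries at non-polymorphisms are junk (`⊤` is read as `0`); only polymorphisms are used. -/
def costMatrix (Γ : VLang D) (m : ℕ) : Matrix (FeasArgs Γ m) (Op D m) ℚ :=
  Matrix.of fun ξ f => (ξ.cf.1.2 (appRows f ξ.args)).untop₀

lemma coe_costMatrix {f : Op D m} (hf : f ∈ Pol Γ m) (ξ : FeasArgs Γ m) :
    (costMatrix Γ m ξ f : WithTop ℚ) = ξ.cf.1.2 (appRows f ξ.args) :=
  WithTop.coe_untop₀_of_ne_top (hf _ ξ.cf.2 _ ξ.feasible)

lemma exists_feasArgs_eq_top {f : Op D m} (hf : f ∉ Pol Γ m) :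
    ∃ ξ : FeasArgs Γ m, ξ.cf.1.2 (appRows f ξ.args) = ⊤ := by
  by_contra! h
  exact hf fun p hp xs hxs => h ⟨⟨p, hp⟩, xs, hxs⟩

lemma mem_wPol_of_costMatrix_mulVec_nonpos [Fintype D] [DecidableEq D] [Finite Γ] {ω : Op D m → ℚ}
    (hω : IsWeighting (Pol Γ) ω) (hcost : costMatrix Γ m *ᵥ ω ≤ 0) : ω ∈ wPol Γ m := by
  refine ⟨hω, fun p hp xs hxs => ?_⟩
  let ξ : FeasArgs Γ m := ⟨⟨p, hp⟩, xs, hxs⟩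
  have hsum : wSum ω p.2 xs = ((costMatrix Γ m *ᵥ ω) ξ : ℚ) := by
    rw [wSum, Finset.sum_filter, Matrix.mulVec, dotProduct, WithTop.coe_sum]
    refine Finset.sum_congr rfl fun f _ => ?_
    split_ifs with h
    · rw [← coe_costMatrix (hω.support_mem f h) ξ, qmul, WithTop.map_coe, mul_comm]
    · simp [not_not.mp h]
  rw [hsum]
  exact_mod_cast hcost ξ

end FeasibleArguments

section ProjectionCertificates

variable {D : Type} {Γ : VLang D} [Finite Γ] {m : ℕ}

structure IsProjMinimal [Finite D] (w : FeasArgs Γ m → ℚ) (c : ℚ) : Prop where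
  nonneg : 0 ≤ w
  proj_eq : ∀ i, (w ᵥ* costMatrix Γ m) (proj D i) = c
  le_of_mem_Pol : ∀ f ∈ Pol Γ m, c ≤ (w ᵥ* costMatrix Γ m) f

lemma IsProjMinimal.sum [Finite D] {ι : Type} (s : Finset ι) {w : ι → FeasArgs Γ m → ℚ} {c : ι → ℚ}
    (h : ∀ i ∈ s, IsProjMinimal (w i) (c i)) : IsProjMinimal (∑ i ∈ s, w i) (∑ i ∈ s, c i) where
  nonneg := Finset.sum_nonneg fun i hi => (h i hi).nonneg
  proj_eq j := by
    rw [Matrix.sum_vecMul, Finset.sum_apply]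
    exact Finset.sum_congr rfl fun i hi => (h i hi).proj_eq j
  le_of_mem_Pol f hf := by
    rw [Matrix.sum_vecMul, Finset.sum_apply]
    exact Finset.sum_le_sum fun i hi => (h i hi).le_of_mem_Pol f hf

lemma isWeighting_of_nonneg_of_nonpos [Fintype D] [DecidableEq D] {C : ∀ k, Set (Op D k)} {k : ℕ}
    {ω : Op D k → ℚ}
    (hproj : ∀ i, proj D i ∈ C k) (hnonneg : ∀ f, ¬IsProj f → 0 ≤ ω f)
    (hnonpos : ∀ f ∉ C k, ω f ≤ 0) (hsum : ∑ f, ω f = 0) : IsWeighting C ω where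
  support_mem f hf := by
    by_contra hfC
    have hf' : ¬IsProj f := by rintro ⟨i, rfl⟩; exact hfC (hproj i)
    exact hf (le_antisymm (hnonpos f hfC) (hnonneg f hf'))
  sum_zero := hsum
  neg_imp_proj f hf := by
    by_contra hf'
    exact (hnonneg f hf').not_gt hf

lemma exists_isProjMinimal_lt [Fintype D] [DecidableEq D] {g : Op D m} (hg : g ∈ Pol Γ m)
    (hg' : g ∉ PolPlus Γ m) :
    ∃ w c, IsProjMinimal w c ∧ c < (w ᵥ* costMatrix Γ m) g := by
  classical
  -- A dual solution `y` of `A` is a weighted polymorphism: nonnegative off the projections,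
  -- zero off `Pol Γ`, of total weight `0`, and satisfying the cost inequalities.
  let A : Matrix (((Op D m ⊕ Op D m) ⊕ (Unit ⊕ Unit)) ⊕ FeasArgs Γ m) (Op D m) ℚ :=
    fromRows (fromRows (fromRows (-diagonal fun f => if IsProj f then 0 else 1)
        (diagonal fun f => if f ∈ Pol Γ m then 0 else 1))
      (fromRows (replicateRow Unit 1) (-replicateRow Unit 1))) (costMatrix Γ m)
  rcases Matrix.farkas A (Pi.single g 1) with ⟨c, hc, hcA⟩ | ⟨y, hy, hgy⟩
  · set κ := c (.inl (.inr (.inl ()))) - c (.inl (.inr (.inr ())))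
    have hcost (f) (hf : f ∈ Pol Γ m) : (c ∘ Sum.inr ᵥ* costMatrix Γ m) f =
        (Pi.single g 1 : Op D m → ℚ) f + (if IsProj f then 0 else c (.inl (.inl (.inl f)))) -
          κ := by
      have hrow (v : Unit → ℚ) : v ᵥ* replicateRow Unit (1 : Op D m → ℚ) = fun _ => v () := by
        ext; simp [vecMul, dotProduct]
      have := congrFun hcA f
      simp [A, vecMul_diagonal, vecMul_neg, hf, hrow] at this
      linarith
    have hslack (f) : 0 ≤ if IsProj f then 0 else c (.inl (.inl (.inl f))) := by
      split_ifs
      exacts [le_rfl, hc _]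
    refine ⟨c ∘ Sum.inr, -κ, ⟨fun ξ => hc _, fun i => ?_, fun f hf => ?_⟩, ?_⟩
    · have hi : proj D i ≠ g := by rintro rfl; exact hg' (Or.inl ⟨i, rfl⟩)
      simp [hcost _ (proj_mem_Pol Γ i), hi, IsProj]
    · have : 0 ≤ (Pi.single g 1 : Op D m → ℚ) f := by
        rw [Pi.single_apply]; split_ifs <;> norm_num
      linarith [hcost f hf, hslack f]
    · linarith [hcost g hg, hslack g, Pi.single_eq_same (M := fun _ : Op D m => ℚ) g 1]
  · simp [A, Pi.le_def, mulVec_diagonal, neg_mulVec, replicateRow_mulVec_eq_const] at hy hgy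
    obtain ⟨⟨⟨hproj, hpol⟩, hle, hge⟩, hcost⟩ := hy
    refine absurd (Or.inr ⟨y, mem_wPol_of_costMatrix_mulVec_nonpos ?_ hcost, hgy⟩) hg'
    refine isWeighting_of_nonneg_of_nonpos (proj_mem_Pol Γ) (fun f hf => ?_) (fun f hf => ?_) ?_
    · simpa [hf] using hproj f
    · simpa [hf] using hpol f
    · rw [← one_dotProduct]; exact le_antisymm hle hge

end ProjectionCertificates

lemma exists_isProjMinimal_eq_imp_mem_PolPlus {D : Type} [Fintype D] [DecidableEq D]
    (Γ : VLang D) [Finite Γ] (m : ℕ) :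
    ∃ w c, IsProjMinimal w c ∧
      ∀ f ∈ Pol Γ m, (w ᵥ* costMatrix Γ m) f = c → f ∈ PolPlus Γ m := by
  classical
  choose w c hw hlt using fun g : {g // g ∈ Pol Γ m ∧ g ∉ PolPlus Γ m} =>
    exists_isProjMinimal_lt g.2.1 g.2.2
  refine ⟨∑ g, w g, ∑ g, c g, IsProjMinimal.sum _ fun g _ => hw g, fun f hf heq => ?_⟩
  by_contra hf'
  rw [Matrix.sum_vecMul, Finset.sum_apply] at heq
  have hle : ∀ g ∈ Finset.univ, c g ≤ (w g ᵥ* costMatrix Γ m) f :=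
    fun g _ => (hw g).le_of_mem_Pol f hf
  exact (hlt ⟨f, hf, hf'⟩).ne
    ((Finset.sum_eq_sum_iff_of_le hle).mp heq.symm ⟨f, hf, hf'⟩ (Finset.mem_univ _))

section WeightedInstance

variable {D : Type} [Fintype D] [DecidableEq D] {Γ : VLang D} [Finite Γ] {m : ℕ}

/-- The variables are the points of `D^m`, so an assignment is an `m`-ary operation `s`; the
constraint of `ξ` applies `w ξ • ξ.cf` to the columns of `ξ.args`, which `s` maps to
`appRows s ξ.args`. As `qmul 0 ⊤ = ⊤`, constraints of weight `0` still rule out `s ∉ Pol Γ`. -/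
noncomputable def weightedInstance (w : FeasArgs Γ m → ℚ) (hw : 0 ≤ w) :
    VInstance D (wRelClo Γ) (Fin m → D) where
  cons := Finset.univ.val.map fun ξ =>
    ⟨ξ.cf.1.1, fun j i => ξ.args i j, fun x => qmul (w ξ) (ξ.cf.1.2 x)⟩
  mem_lang := by
    simp only [Multiset.mem_map]
    rintro _ ⟨ξ, -, rfl⟩
    exact (isWClosed_wRelClo Γ).2.1 _ _ _ (hw ξ) (subset_wRelClo Γ ξ.cf.2)

lemma weightedInstance_cost (w : FeasArgs Γ m → ℚ) (hw : 0 ≤ w) (s : Op D m) :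
    (weightedInstance w hw).cost s = ∑ ξ, qmul (w ξ) (ξ.cf.1.2 (appRows s ξ.args)) := by
  simp only [VInstance.cost, weightedInstance, Multiset.map_map]
  rfl

lemma weightedInstance_cost_of_mem_Pol (w : FeasArgs Γ m → ℚ) (hw : 0 ≤ w) {s : Op D m}
    (hs : s ∈ Pol Γ m) : (weightedInstance w hw).cost s = (w ᵥ* costMatrix Γ m) s := by
  simp only [weightedInstance_cost, ← coe_costMatrix hs, qmul, WithTop.map_coe, vecMul,
    dotProduct, WithTop.coe_sum]

lemma weightedInstance_cost_of_not_mem_Pol (w : FeasArgs Γ m → ℚ) (hw : 0 ≤ w) {s : Op D m}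
    (hs : s ∉ Pol Γ m) : (weightedInstance w hw).cost s = ⊤ := by
  obtain ⟨ξ, hξ⟩ := exists_feasArgs_eq_top hs
  rw [weightedInstance_cost, WithTop.sum_eq_top]
  exact ⟨ξ, Finset.mem_univ _, by rw [hξ]; rfl⟩

lemma IsProjMinimal.le_weightedInstance_cost {w : FeasArgs Γ m → ℚ} {c : ℚ}
    (h : IsProjMinimal w c) (s : Op D m) :
    (c : WithTop ℚ) ≤ (weightedInstance w h.nonneg).cost s := by
  by_cases hs : s ∈ Pol Γ m
  · rw [weightedInstance_cost_of_mem_Pol _ _ hs]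
    exact_mod_cast h.le_of_mem_Pol s hs
  · rw [weightedInstance_cost_of_not_mem_Pol _ _ hs]
    exact le_top

end WeightedInstance

theorem exists_costF_minimizers_subset_appRows_PolPlus {D : Type} [Fintype D] [DecidableEq D]
    (Γ : VLang D) [Finite Γ] {m r : ℕ} (t : Fin m → Fin r → D) :
    ∃ (ϱ : CostF D r) (P : ℚ), ⟨r, ϱ⟩ ∈ wRelClo Γ ∧ (∀ x, (P : WithTop ℚ) ≤ ϱ x) ∧
      (∀ l, ϱ (t l) = P) ∧ ∀ x, ϱ x = P → ∃ f ∈ PolPlus Γ m, appRows f t = x := by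
  obtain ⟨w, P, hw, hmin⟩ := exists_isProjMinimal_eq_imp_mem_PolPlus Γ m
  let I := weightedInstance w hw.nonneg
  let ϱ : CostF D r := fun x =>
    (Finset.univ.filter fun s : Op D m => ∀ j, s (fun i => t i j) = x j).inf I.cost
  refine ⟨ϱ, P, (isWClosed_wRelClo Γ).1 r ϱ (.of_instance I _),
    fun x => Finset.le_inf fun s _ => hw.le_weightedInstance_cost s, fun l => ?_, fun x hx => ?_⟩
  · refine le_antisymm ?_ (Finset.le_inf fun s _ => hw.le_weightedInstance_cost s)
    calc ϱ (t l) ≤ I.cost (proj D l) := Finset.inf_le (by simp [proj])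
      _ = P := by rw [weightedInstance_cost_of_mem_Pol _ _ (proj_mem_Pol Γ l), hw.proj_eq l]
  · have hne : (Finset.univ.filter fun s : Op D m => ∀ j, s (fun i => t i j) = x j).Nonempty := by
      by_contra h
      rw [Finset.not_nonempty_iff_eq_empty] at h
      exact WithTop.top_ne_coe (by simpa only [ϱ, h, Finset.inf_empty] using hx)
    obtain ⟨s, hs, hsx⟩ := Finset.exists_mem_eq_inf _ hne I.cost
    have hsP : I.cost s = P := hsx ▸ hx
    have hsPol : s ∈ Pol Γ m := by
      by_contra h
      exact WithTop.top_ne_coe (weightedInstance_cost_of_not_mem_Pol _ _ h ▸ hsP)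
    rw [weightedInstance_cost_of_mem_Pol _ _ hsPol, WithTop.coe_inj] at hsP
    exact ⟨s, hmin s hsPol hsP, funext (Finset.mem_filter.mp hs).2⟩

theorem exists_costF_of_compatible_relation_general {D : Type} [Fintype D] [DecidableEq D]
    (Γ : VLang D) (hfin : Γ.Finite)
    (r : ℕ) (R : Set (Fin r → D))
    (hR : ∀ (k : ℕ), ∀ f ∈ PolPlus Γ k, ∀ xs : Fin k → Fin r → D,
      (∀ i, xs i ∈ R) → appRows f xs ∈ R) :
    ∃ (ϱ : CostF D r) (P : ℚ), (⟨r, ϱ⟩ : Σ r : ℕ, CostF D r) ∈ wRelClo Γ ∧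
      ∀ x : Fin r → D, (P : WithTop ℚ) ≤ ϱ x ∧ (ϱ x = (P : WithTop ℚ) ↔ x ∈ R) := by
  have : Finite Γ := hfin
  obtain ⟨m, t, -, rfl⟩ := (Set.toFinite R).fin_param
  obtain ⟨ϱ, P, hϱ, hP, htP, hmin⟩ := exists_costF_minimizers_subset_appRows_PolPlus Γ t
  refine ⟨ϱ, P, hϱ, fun x => ⟨hP x, fun hx => ?_, ?_⟩⟩
  · obtain ⟨f, hf, rfl⟩ := hmin x hx
    exact hR m f hf t fun i => ⟨i, rfl⟩
  · rintro ⟨l, rfl⟩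
    exact htP l

/-- For a finite core language `Γ` and a relation `R` compatible with every
operation of `Pol⁺(Γ)`, there is a cost function `ϱ_R ∈ wRelClo(Γ)` and a rational `P` with
`ϱ_R ≥ P` everywhere and `ϱ_R(x) = P` iff `x ∈ R`. -/
theorem exists_costF_of_compatible_relation {D : Type} [Fintype D] [DecidableEq D] [Nonempty D]
    (Γ : VLang D) (hfin : Γ.Finite) (hcore : IsCore Γ)
    (r : ℕ) (R : Set (Fin r → D))
    (hR : ∀ (k : ℕ), ∀ f ∈ PolPlus Γ k, ∀ xs : Fin k → Fin r → D,
      (∀ i, xs i ∈ R) → appRows f xs ∈ R) :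
    ∃ (ϱ : CostF D r) (P : ℚ), (⟨r, ϱ⟩ : Σ r : ℕ, CostF D r) ∈ wRelClo Γ ∧
      ∀ x : Fin r → D, (P : WithTop ℚ) ≤ ϱ x ∧ (ϱ x = (P : WithTop ℚ) ↔ x ∈ R) :=
  exists_costF_of_compatible_relation_general Γ hfin r R hR
end
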